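/- Let X, U_hat, U be square-integrable random vectors and h, g measurable functions such that h(X), g(U_hat), g(U) are square-integrable random vectors in R^n, with g(U) uncorrelated with both h(X) and g(U_hat), and with Cov(g(U_hat)) + Cov(g(U)) invertible. Define Z = h(X) - S(g(U_hat) - g(U)) for a matrix S in R^{n×n}. Then the trace of Cov(Z) is minimized over S by S* = Cov(h(X), g(U_hat)) (Cov(g(U_hat)) + Cov(g(U)))^{-1}. -/

import Mathlib

/-! With `D = g(Û) - g(U)`, the uncorrelatedness hypotheses give `Cov(D) = Cov(g Û) + Cov(g U)` and
`Cov(h X, D) = Cov(h X, g Û)`, so `S*` solves the normal equation `S* Cov(D) = Cov(h X, D)`: the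
residual `Z S* = h X - S* D` is uncorrelated with `D`. Writing `Z S = Z S* - (S - S*) D` then gives
`Cov(Z S) = Cov(Z S*) + Cov((S - S*) D)`, and the last trace is nonnegative. -/

open MeasureTheory Matrix

/-- Cross-covariance matrix of two random vectors. -/
noncomputable def cov {Ω : Type*} [MeasurableSpace Ω] (μ : Measure Ω)
    {a b : Type*} [Fintype a] [Fintype b]
    (A : Ω → a → ℝ) (B : Ω → b → ℝ) : Matrix a b ℝ :=
  Matrix.of fun i j =>
    ∫ ω, (A ω i - ∫ ω', A ω' i ∂μ) * (B ω j - ∫ ω', B ω' j ∂μ) ∂μ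

section Covariance

variable {Ω ι κ : Type*} [MeasurableSpace Ω] {μ : Measure Ω} [Fintype ι] [Fintype κ]

lemma cov_apply (A : Ω → ι → ℝ) (B : Ω → κ → ℝ) (i : ι) (j : κ) :
    cov μ A B i j = ∫ ω, (A ω i - ∫ ω', A ω' i ∂μ) * (B ω j - ∫ ω', B ω' j ∂μ) ∂μ :=
  rfl

lemma cov_transpose (A : Ω → ι → ℝ) (B : Ω → κ → ℝ) : (cov μ A B)ᵀ = cov μ B A := by
  ext i j
  simp only [transpose_apply, cov_apply, mul_comm]

lemma trace_cov_self_nonneg (A : Ω → ι → ℝ) : 0 ≤ (cov μ A A).trace :=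
  Finset.sum_nonneg fun _ _ => integral_nonneg fun _ => mul_self_nonneg _

lemma MeasureTheory.MemLp.mulVec {A : Ω → ι → ℝ} (hA : MemLp A 2 μ) (M : Matrix κ ι ℝ) :
    MemLp (fun ω => M *ᵥ A ω) 2 μ :=
  (Matrix.mulVecLin M).toContinuousLinearMap.comp_memLp' hA

variable [IsFiniteMeasure μ]

lemma integrable_centered_mul {A : Ω → ι → ℝ} {B : Ω → κ → ℝ}
    (hA : MemLp A 2 μ) (hB : MemLp B 2 μ) (i : ι) (j : κ) :
    Integrable (fun ω => (A ω i - ∫ ω', A ω' i ∂μ) * (B ω j - ∫ ω', B ω' j ∂μ)) μ :=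
  ((hA.eval i).sub (memLp_const _)).integrable_mul ((hB.eval j).sub (memLp_const _))

lemma cov_sub_left {A A' : Ω → ι → ℝ} {B : Ω → κ → ℝ}
    (hA : MemLp A 2 μ) (hA' : MemLp A' 2 μ) (hB : MemLp B 2 μ) :
    cov μ (fun ω => A ω - A' ω) B = cov μ A B - cov μ A' B := by
  ext i j
  have hmean : ∫ ω, (A ω - A' ω) i ∂μ = (∫ ω, A ω i ∂μ) - ∫ ω, A' ω i ∂μ :=
    integral_sub ((hA.eval i).integrable one_le_two) ((hA'.eval i).integrable one_le_two)
  rw [Matrix.sub_apply, cov_apply, cov_apply, cov_apply, hmean,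
    ← integral_sub (integrable_centered_mul hA hB i j) (integrable_centered_mul hA' hB i j)]
  congr 1 with ω
  simp only [Pi.sub_apply]
  ring

lemma cov_mulVec_left {A : Ω → ι → ℝ} {B : Ω → κ → ℝ}
    (hA : MemLp A 2 μ) (hB : MemLp B 2 μ) {ι' : Type*} [Fintype ι'] (M : Matrix ι' ι ℝ) :
    cov μ (fun ω => M *ᵥ A ω) B = M * cov μ A B := by
  ext i j
  have hmean : ∫ ω, (M *ᵥ A ω) i ∂μ = (M *ᵥ fun k => ∫ ω, A ω k ∂μ) i := by
    simp only [mulVec, dotProduct]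
    rw [integral_finsetSum _ fun k _ => ((hA.eval k).integrable one_le_two).const_mul _]
    simp only [integral_const_mul]
  rw [cov_apply, hmean, mul_apply]
  simp only [cov_apply, ← integral_const_mul]
  rw [← integral_finsetSum _ fun k _ => (integrable_centered_mul hA hB k j).const_mul _]
  congr 1 with ω
  simp only [mulVec, dotProduct, ← Finset.sum_sub_distrib, Finset.sum_mul]
  exact Finset.sum_congr rfl fun k _ => by ring

lemma cov_sub_right {A : Ω → ι → ℝ} {B B' : Ω → κ → ℝ}
    (hA : MemLp A 2 μ) (hB : MemLp B 2 μ) (hB' : MemLp B' 2 μ) :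
    cov μ A (fun ω => B ω - B' ω) = cov μ A B - cov μ A B' := by
  rw [← cov_transpose, cov_sub_left hB hB' hA, transpose_sub, cov_transpose, cov_transpose]

lemma cov_mulVec_right {A : Ω → ι → ℝ} {B : Ω → κ → ℝ}
    (hA : MemLp A 2 μ) (hB : MemLp B 2 μ) {κ' : Type*} [Fintype κ'] (M : Matrix κ' κ ℝ) :
    cov μ A (fun ω => M *ᵥ B ω) = cov μ A B * Mᵀ := by
  rw [← cov_transpose, cov_mulVec_left hB hA, transpose_mul, cov_transpose]

lemma cov_sub_sub_of_cov_eq_zero {R E : Ω → ι → ℝ} (hR : MemLp R 2 μ) (hE : MemLp E 2 μ)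
    (hRE : cov μ R E = 0) :
    cov μ (fun ω => R ω - E ω) (fun ω => R ω - E ω) = cov μ R R + cov μ E E := by
  have hER : cov μ E R = 0 := by rw [← cov_transpose, hRE, transpose_zero]
  have hRsubE : MemLp (fun ω => R ω - E ω) 2 μ := hR.sub hE
  rw [cov_sub_left hR hE hRsubE, cov_sub_right hR hR hE, cov_sub_right hE hR hE, hRE, hER]
  abel

theorem trace_cov_sub_mulVec_le {H : Ω → κ → ℝ} {D : Ω → ι → ℝ}
    (hH : MemLp H 2 μ) (hD : MemLp D 2 μ) {S₀ : Matrix κ ι ℝ}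
    (hS₀ : S₀ * cov μ D D = cov μ H D) (S : Matrix κ ι ℝ) :
    (cov μ (fun ω => H ω - S₀ *ᵥ D ω) (fun ω => H ω - S₀ *ᵥ D ω)).trace ≤
      (cov μ (fun ω => H ω - S *ᵥ D ω) (fun ω => H ω - S *ᵥ D ω)).trace := by
  have hR : MemLp (fun ω => H ω - S₀ *ᵥ D ω) 2 μ := hH.sub (hD.mulVec S₀)
  have horth : cov μ (fun ω => H ω - S₀ *ᵥ D ω) (fun ω => (S - S₀) *ᵥ D ω) = 0 := by
    rw [cov_mulVec_right hR hD, cov_sub_left hH (hD.mulVec S₀) hD, cov_mulVec_left hD hD, hS₀,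
      sub_self, Matrix.zero_mul]
  have hsplit : (fun ω => H ω - S *ᵥ D ω) = fun ω => (H ω - S₀ *ᵥ D ω) - (S - S₀) *ᵥ D ω := by
    funext ω
    rw [sub_mulVec]
    abel
  rw [hsplit, cov_sub_sub_of_cov_eq_zero hR (hD.mulVec _) horth, trace_add]
  exact le_add_of_nonneg_right (trace_cov_self_nonneg _)

end Covariance

theorem optimal_gain_general {Ω α β : Type*} [MeasurableSpace Ω]
    (μ : Measure Ω) [IsProbabilityMeasure μ] {n : ℕ}
    (X : Ω → α) (Uhat U : Ω → β) (h : α → Fin n → ℝ) (g : β → Fin n → ℝ)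
    (hL2 : MemLp (fun ω => h (X ω)) 2 μ)
    (hUhatL2 : MemLp (fun ω => g (Uhat ω)) 2 μ)
    (hUL2 : MemLp (fun ω => g (U ω)) 2 μ)
    (huncor1 : cov μ (fun ω => g (U ω)) (fun ω => h (X ω)) = 0)
    (huncor2 : cov μ (fun ω => g (U ω)) (fun ω => g (Uhat ω)) = 0)
    (hinv : IsUnit (cov μ (fun ω => g (Uhat ω)) (fun ω => g (Uhat ω)) +
      cov μ (fun ω => g (U ω)) (fun ω => g (U ω))))
    (Z : Matrix (Fin n) (Fin n) ℝ → Ω → Fin n → ℝ)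
    (hZ : ∀ S ω, Z S ω = h (X ω) - S.mulVec (g (Uhat ω) - g (U ω)))
    (Sopt : Matrix (Fin n) (Fin n) ℝ)
    (hSopt : Sopt = cov μ (fun ω => h (X ω)) (fun ω => g (Uhat ω)) *
      (cov μ (fun ω => g (Uhat ω)) (fun ω => g (Uhat ω)) +
        cov μ (fun ω => g (U ω)) (fun ω => g (U ω)))⁻¹) :
    ∀ S : Matrix (Fin n) (Fin n) ℝ,
      (cov μ (Z Sopt) (Z Sopt)).trace ≤ (cov μ (Z S) (Z S)).trace := by
  set D := fun ω => g (Uhat ω) - g (U ω)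
  have hD : MemLp D 2 μ := hUhatL2.sub hUL2
  have huncor2_symm : cov μ (fun ω => g (Uhat ω)) (fun ω => g (U ω)) = 0 := by
    rw [← cov_transpose, huncor2, transpose_zero]
  have hDD : cov μ D D = cov μ (fun ω => g (Uhat ω)) (fun ω => g (Uhat ω)) +
      cov μ (fun ω => g (U ω)) (fun ω => g (U ω)) := by
    rw [cov_sub_left hUhatL2 hUL2 hD, cov_sub_right hUhatL2 hUhatL2 hUL2,
      cov_sub_right hUL2 hUhatL2 hUL2, huncor2, huncor2_symm]
    abel
  have hHD : cov μ (fun ω => h (X ω)) D = cov μ (fun ω => h (X ω)) (fun ω => g (Uhat ω)) := by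
    rw [cov_sub_right hL2 hUhatL2 hUL2, ← cov_transpose (fun ω => g (U ω)), huncor1,
      transpose_zero, sub_zero]
  have hnormal : Sopt * cov μ D D = cov μ (fun ω => h (X ω)) D := by
    rw [hDD, hHD, hSopt, Matrix.mul_assoc, nonsing_inv_mul _ ((isUnit_iff_isUnit_det _).mp hinv),
      Matrix.mul_one]
  have hZD : Z = fun S ω => h (X ω) - S *ᵥ D ω := funext fun S => funext (hZ S)
  rw [hZD]
  exact trace_cov_sub_mulVec_le hL2 hD hnormal

/-- The optimal gain minimizing the trace generalized variance of
`Z = h(X) - S (g(U_hat) - g(U))` is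
`S* = Cov(h X, g U_hat) (Cov(g U_hat) + Cov(g U))⁻¹`. -/
theorem optimal_gain {Ω α β : Type*} [MeasurableSpace Ω] [MeasurableSpace α] [MeasurableSpace β]
    (μ : Measure Ω) [IsProbabilityMeasure μ] {n : ℕ}
    (X : Ω → α) (Uhat U : Ω → β) (h : α → Fin n → ℝ) (g : β → Fin n → ℝ)
    (hXm : Measurable X) (hUhatm : Measurable Uhat) (hUm : Measurable U)
    (hm : Measurable h) (gm : Measurable g)
    (hL2 : MemLp (fun ω => h (X ω)) 2 μ)
    (hUhatL2 : MemLp (fun ω => g (Uhat ω)) 2 μ)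
    (hUL2 : MemLp (fun ω => g (U ω)) 2 μ)
    (huncor1 : cov μ (fun ω => g (U ω)) (fun ω => h (X ω)) = 0)
    (huncor2 : cov μ (fun ω => g (U ω)) (fun ω => g (Uhat ω)) = 0)
    (hinv : IsUnit (cov μ (fun ω => g (Uhat ω)) (fun ω => g (Uhat ω)) +
      cov μ (fun ω => g (U ω)) (fun ω => g (U ω))))
    (Z : Matrix (Fin n) (Fin n) ℝ → Ω → Fin n → ℝ)
    (hZ : ∀ S ω, Z S ω = h (X ω) - S.mulVec (g (Uhat ω) - g (U ω)))
    (Sopt : Matrix (Fin n) (Fin n) ℝ)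
    (hSopt : Sopt = cov μ (fun ω => h (X ω)) (fun ω => g (Uhat ω)) *
      (cov μ (fun ω => g (Uhat ω)) (fun ω => g (Uhat ω)) +
        cov μ (fun ω => g (U ω)) (fun ω => g (U ω)))⁻¹) :
    ∀ S : Matrix (Fin n) (Fin n) ℝ,
      (cov μ (Z Sopt) (Z Sopt)).trace ≤ (cov μ (Z S) (Z S)).trace :=
  optimal_gain_general μ X Uhat U h g hL2 hUhatL2 hUL2 huncor1 huncor2 hinv Z hZ Sopt hSopt
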